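/- arXiv:2206.02587 — 3 statements merged into one kernel-verified Lean document; each statement's English description precedes it below -/
import Mathlib

section
/- Let $V$ and $W$ be vectors in $\mathbb{R}^n$ with $n \geq 2$, $\mathrm{Ric}$ a symmetric 2-tensor, $R = \sum_a \mathrm{Ric}_{aa}$ its trace, and $R_{cadb}$ a 4-tensor satisfying the symmetries of the Riemann curvature tensor with $\sum_c R_{cacb} = \mathrm{Ric}_{ab}$. Then, with $m = n/2$, $\int_{S^{n-1}} \Bigl(-\frac{m(m+1)}{3} V^a W^b \mathrm{Ric}_{cd}\,\xi_a\xi_b\xi_c\xi_d + \frac{2m}{3} V^a W^b \xi_c(\xi_a \mathrm{Ric}_{bc} + \xi_b \mathrm{Ric}_{ac} - R_{cadb}\xi_d)\Bigr) d\xi = \frac{v_{n-1}}{6}\bigl(\mathrm{Ric}_{ab} - \tfrac{1}{2} R\, \delta_{ab}\bigr) V^a W^b$, i.e. the spherical integral of this symbol equals $\frac{v_{n-1}}{6} G(V,W)$ where $G$ is the Einstein tensor. -/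
/-!
The spherical moments `∫ ξ_a ξ_b = δ_ab v/n` and
`∫ ξ_a ξ_b ξ_c ξ_d = (δ_ab δ_cd + δ_ac δ_bd + δ_ad δ_bc) v/(n(n+2))` are read off from Gaussian
integrals. In polar coordinates, a function homogeneous of degree `d` integrates against
`exp (-‖x‖²)` to its spherical integral times `Γ((n+d)/2)/2`; on the other hand, Gaussian
integration by parts, `∫ ⟪v, x⟫ F(x) exp (-‖x‖²) = ½ ∫ ∂_v F(x) exp (-‖x‖²)`, evaluates the
Gaussian integrals of `⟪u, x⟫⟪v, x⟫` and of products of four such factors (Wick's formula).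
Contracted with `V`, `W`, `Ric` and `Rm`, the moments reduce the integral to `Ric(V, W)`,
`⟪V, W⟫` and `R`, by the trace identity `∑_c R_cacb = Ric_ab` and the symmetry of `Ric`.
-/

open MeasureTheory Metric Finset

/-- The standard surface measure on the unit sphere `S^{n-1} ⊂ ℝ^n`. -/
noncomputable def sphereMeasure (n : ℕ) :
    Measure (sphere (0 : EuclideanSpace ℝ (Fin n)) 1) :=
  (volume : Measure (EuclideanSpace ℝ (Fin n))).toSphere

/-- The total volume `v_{n-1}` of the unit sphere. -/
noncomputable def sphereVolume (n : ℕ) : ℝ :=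
  (sphereMeasure n Set.univ).toReal

open Real Set
open scoped RealInnerProductSpace

lemma integral_Ioi_pow_mul_exp_neg_sq (p : ℕ) :
    ∫ r in Ioi (0 : ℝ), r ^ p * exp (-r ^ 2) = Gamma ((p + 1) / 2) / 2 := by
  rw [← one_div_mul_eq_div, ← integral_rpow_mul_exp_neg_rpow (p := 2) (q := p) (by norm_num)
    (neg_one_lt_zero.trans_le (Nat.cast_nonneg p))]
  refine setIntegral_congr_fun measurableSet_Ioi fun x _ => ?_
  rw [← rpow_natCast x p, ← rpow_two]

section Polar

variable {E : Type*} [NormedAddCommGroup E] [NormedSpace ℝ E] [FiniteDimensional ℝ E]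
  [MeasurableSpace E] [BorelSpace E] [Nontrivial E] (μ : Measure E) [μ.IsAddHaarMeasure]

lemma integrable_pow_norm_mul_exp_neg_sq_norm (k : ℕ) :
    Integrable (fun x : E => ‖x‖ ^ k * exp (-‖x‖ ^ 2)) μ := by
  refine (integrable_fun_norm_addHaar μ (f := fun r => r ^ k * exp (-r ^ 2))).2 ?_
  have := integrable_rpow_mul_exp_neg_mul_sq (b := 1) one_pos
    (s := ((Module.finrank ℝ E - 1 + k : ℕ) : ℝ))
    (by linarith [Nat.cast_nonneg (α := ℝ) (Module.finrank ℝ E - 1 + k)])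
  refine this.integrableOn.congr_fun (fun r _ => ?_) measurableSet_Ioi
  simp only [rpow_natCast, smul_eq_mul, neg_one_mul, pow_add]
  ring

theorem integral_mul_exp_neg_sq_norm_of_homogeneous {f : E → ℝ} {d : ℕ}
    (hf : ∀ x, ∀ r : ℝ, 0 < r → f (r • x) = r ^ d * f x)
    (hint : Integrable (fun x => f x * exp (-‖x‖ ^ 2)) μ) :
    ∫ x, f x * exp (-‖x‖ ^ 2) ∂μ
      = (∫ ξ : sphere (0 : E) 1, f ξ ∂μ.toSphere)
        * (Gamma ((Module.finrank ℝ E + d) / 2) / 2) := by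
  set g : E → ℝ := fun x => f x * exp (-‖x‖ ^ 2)
  have hpolar := μ.measurePreserving_homeomorphUnitSphereProd
  have hg : ∀ x : ({(0 : E)}ᶜ : Set E),
      g x = g (((homeomorphUnitSphereProd E x).2 : ℝ) •
        ((homeomorphUnitSphereProd E x).1 : E)) := by
    intro x
    rw [homeomorphUnitSphereProd_apply_snd_coe, homeomorphUnitSphereProd_apply_fst_coe,
      smul_inv_smul₀ (norm_ne_zero_iff.2 x.2)]
  have hint' : Integrable (fun p : sphere (0 : E) 1 × Ioi (0 : ℝ) => g ((p.2 : ℝ) • (p.1 : E)))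
      (μ.toSphere.prod (.volumeIoiPow (Module.finrank ℝ E - 1))) := by
    rw [← hpolar.integrable_comp_emb (Homeomorph.measurableEmbedding _)]
    refine Integrable.congr ?_ (ae_of_all _ hg)
    exact (integrableOn_iff_comap_subtypeVal (measurableSet_singleton _).compl).1 hint.integrableOn
  have hradial : ∀ ξ : sphere (0 : E) 1,
      ∫ r : Ioi (0 : ℝ), g ((r : ℝ) • (ξ : E)) ∂(.volumeIoiPow (Module.finrank ℝ E - 1))
        = f ξ * (Gamma ((Module.finrank ℝ E + d) / 2) / 2) := by
    intro ξ
    have hN : ((Module.finrank ℝ E - 1 + d : ℕ) : ℝ) + 1 = Module.finrank ℝ E + d := by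
      push_cast [Nat.cast_sub Module.finrank_pos]; ring
    rw [← hN, ← integral_Ioi_pow_mul_exp_neg_sq, ← integral_const_mul, Measure.volumeIoiPow,
      integral_withDensity_eq_integral_toReal_smul (by fun_prop)
        (ae_of_all _ fun _ => ENNReal.ofReal_lt_top),
      integral_subtype_comap measurableSet_Ioi
        (fun r : ℝ => (ENNReal.ofReal (r ^ _)).toReal • g (r • (ξ : E)))]
    refine setIntegral_congr_fun measurableSet_Ioi fun r (hr : 0 < r) => ?_
    have hnorm : ‖r • (ξ : E)‖ = r := by
      rw [norm_smul, norm_eq_of_mem_sphere ξ, mul_one, norm_of_nonneg hr.le]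
    simp only [g, hf _ _ hr, hnorm, smul_eq_mul, ENNReal.toReal_ofReal (pow_nonneg hr.le _)]
    ring
  calc ∫ x, g x ∂μ = ∫ x : ({(0 : E)}ᶜ : Set E), g x ∂(μ.comap (↑)) := by
        rw [integral_subtype_comap (measurableSet_singleton _).compl, restrict_compl_singleton]
    _ = ∫ p, g ((p.2 : ℝ) • (p.1 : E))
          ∂(μ.toSphere.prod (.volumeIoiPow (Module.finrank ℝ E - 1))) := by
        rw [← hpolar.integral_comp (Homeomorph.measurableEmbedding _)]
        exact integral_congr_ae (ae_of_all _ hg)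
    _ = _ := by
        rw [integral_prod _ hint', ← integral_mul_const]
        exact integral_congr_ae (ae_of_all _ hradial)

lemma integral_exp_neg_sq_norm_eq_toSphere_mul_Gamma :
    ∫ x, exp (-‖x‖ ^ 2) ∂μ
      = μ.toSphere.real univ * (Gamma (Module.finrank ℝ E / 2) / 2) := by
  simpa using integral_mul_exp_neg_sq_norm_of_homogeneous μ (f := fun _ => 1) (d := 0)
    (by simp) (by simpa using integrable_pow_norm_mul_exp_neg_sq_norm μ 0)

end Polar

theorem HasLineDerivAt.mul {E : Type*} [NormedAddCommGroup E] [NormedSpace ℝ E]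
    {f g : E → ℝ} {f' g' : ℝ} {x v : E}
    (hf : HasLineDerivAt ℝ f f' x v) (hg : HasLineDerivAt ℝ g g' x v) :
    HasLineDerivAt ℝ (fun y => f y * g y) (f' * g x + f x * g') x v := by
  have h : HasDerivAt (fun t : ℝ => f (x + t • v) * g (x + t • v))
      (f' * g (x + (0 : ℝ) • v) + f (x + (0 : ℝ) • v) * g') 0 := hf.fun_mul hg
  rwa [zero_smul, add_zero] at h

section Gaussian

variable {E : Type*} [NormedAddCommGroup E] [InnerProductSpace ℝ E]

lemma hasLineDerivAt_inner (u x v : E) : HasLineDerivAt ℝ (fun y => ⟪u, y⟫) ⟪u, v⟫ x v :=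
  (innerSL ℝ u).hasFDerivAt.hasLineDerivAt v

lemma hasLineDerivAt_exp_neg_sq_norm (x v : E) :
    HasLineDerivAt ℝ (fun y : E => exp (-‖y‖ ^ 2)) (-2 * ⟪v, x⟫ * exp (-‖x‖ ^ 2)) x v := by
  convert ((hasStrictFDerivAt_norm_sq x).hasFDerivAt.neg.exp).hasLineDerivAt v using 1
  · rfl
  · simp only [real_inner_comm, neg_mul, Pi.neg_apply, smul_neg, neg_apply, smul_apply,
      coe_innerSL_apply, nsmul_eq_mul, Nat.cast_ofNat, smul_eq_mul, neg_inj]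
    ring

variable [FiniteDimensional ℝ E] [MeasurableSpace E] [BorelSpace E]
  (μ : Measure E) [μ.IsAddHaarMeasure]

theorem integral_inner_mul_mul_exp_neg_sq_norm {F F' : E → ℝ} {v : E}
    (hF : ∀ x, HasLineDerivAt ℝ F (F' x) x v)
    (hF'g : Integrable (fun x => F' x * exp (-‖x‖ ^ 2)) μ)
    (hvFg : Integrable (fun x => ⟪v, x⟫ * F x * exp (-‖x‖ ^ 2)) μ)
    (hFg : Integrable (fun x => F x * exp (-‖x‖ ^ 2)) μ) :
    ∫ x, ⟪v, x⟫ * F x * exp (-‖x‖ ^ 2) ∂μ = (∫ x, F' x * exp (-‖x‖ ^ 2) ∂μ) / 2 := by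
  have hFg' : Integrable (fun x => F x * (-2 * ⟪v, x⟫ * exp (-‖x‖ ^ 2))) μ :=
    (hvFg.const_mul (-2)).congr (ae_of_all _ fun x => by ring)
  have hparts := integral_bilinear_hasLineDerivAt_right_eq_neg_left_of_integrable
    (B := ContinuousLinearMap.mul ℝ ℝ) hF'g hFg' hFg (fun x _ => hF x)
    (fun x _ => hasLineDerivAt_exp_neg_sq_norm x v)
  simp only [ContinuousLinearMap.mul_apply'] at hparts
  have hscale : ∫ x, F x * (-2 * ⟪v, x⟫ * exp (-‖x‖ ^ 2)) ∂μ
      = -2 * ∫ x, ⟪v, x⟫ * F x * exp (-‖x‖ ^ 2) ∂μ := by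
    rw [← integral_const_mul]; congr 1; ext x; ring
  linarith

variable [Nontrivial E]

lemma integrable_prod_inner_mul_exp_neg_sq_norm {k : ℕ} (u : Fin k → E) :
    Integrable (fun x => (∏ i, ⟪u i, x⟫) * exp (-‖x‖ ^ 2)) μ := by
  refine ((integrable_pow_norm_mul_exp_neg_sq_norm μ k).const_mul (∏ i, ‖u i‖)).mono'
    (by fun_prop) (ae_of_all _ fun x => ?_)
  rw [norm_mul, norm_of_nonneg (exp_pos _).le, Real.norm_eq_abs, ← mul_assoc]
  gcongr
  calc |∏ i, ⟪u i, x⟫| = ∏ i, |⟪u i, x⟫| := Finset.abs_prod _ _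
    _ ≤ ∏ i, (‖u i‖ * ‖x‖) :=
      Finset.prod_le_prod (fun _ _ => abs_nonneg _) fun i _ => abs_real_inner_le_norm _ _
    _ = (∏ i, ‖u i‖) * ‖x‖ ^ k := by simp [Finset.prod_mul_distrib]

theorem integral_inner_mul_inner_mul_exp_neg_sq_norm (u v : E) :
    ∫ x, ⟪u, x⟫ * ⟪v, x⟫ * exp (-‖x‖ ^ 2) ∂μ = ⟪u, v⟫ / 2 * ∫ x, exp (-‖x‖ ^ 2) ∂μ := by
  rw [integral_inner_mul_mul_exp_neg_sq_norm μ (F' := fun _ => ⟪v, u⟫)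
    (fun x => hasLineDerivAt_inner v x u)
    (by simpa using (integrable_prod_inner_mul_exp_neg_sq_norm μ ![]).const_mul ⟪v, u⟫)
    (by simpa using integrable_prod_inner_mul_exp_neg_sq_norm μ ![u, v])
    (by simpa using integrable_prod_inner_mul_exp_neg_sq_norm μ ![v]),
    integral_const_mul, real_inner_comm]
  ring

theorem integral_inner_mul_inner_mul_inner_mul_inner_mul_exp_neg_sq_norm (u v w z : E) :
    ∫ x, ⟪u, x⟫ * ⟪v, x⟫ * ⟪w, x⟫ * ⟪z, x⟫ * exp (-‖x‖ ^ 2) ∂μ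
      = (⟪u, v⟫ * ⟪w, z⟫ + ⟪u, w⟫ * ⟪v, z⟫ + ⟪u, z⟫ * ⟪v, w⟫) / 4
        * ∫ x, exp (-‖x‖ ^ 2) ∂μ := by
  have hquad : ∀ a b : E, Integrable (fun x => ⟪a, x⟫ * ⟪b, x⟫ * exp (-‖x‖ ^ 2)) μ := fun a b => by
    simpa using integrable_prod_inner_mul_exp_neg_sq_norm μ ![a, b]
  have hderiv : ∀ x, HasLineDerivAt ℝ (fun y => ⟪v, y⟫ * ⟪w, y⟫ * ⟪z, y⟫)
      ((⟪v, u⟫ * ⟪w, x⟫ + ⟪v, x⟫ * ⟪w, u⟫) * ⟪z, x⟫ + ⟪v, x⟫ * ⟪w, x⟫ * ⟪z, u⟫) x u := fun x =>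
    ((hasLineDerivAt_inner v x u).mul (hasLineDerivAt_inner w x u)).mul (hasLineDerivAt_inner z x u)
  have hsplit : ∀ x, ((⟪v, u⟫ * ⟪w, x⟫ + ⟪v, x⟫ * ⟪w, u⟫) * ⟪z, x⟫ + ⟪v, x⟫ * ⟪w, x⟫ * ⟪z, u⟫)
      * exp (-‖x‖ ^ 2) = ⟪u, v⟫ * (⟪w, x⟫ * ⟪z, x⟫ * exp (-‖x‖ ^ 2))
        + ⟪u, w⟫ * (⟪v, x⟫ * ⟪z, x⟫ * exp (-‖x‖ ^ 2))
        + ⟪u, z⟫ * (⟪v, x⟫ * ⟪w, x⟫ * exp (-‖x‖ ^ 2)) := fun x => by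
    simp only [real_inner_comm u]; ring
  have hsplit_int := (((hquad w z).const_mul ⟪u, v⟫).fun_add ((hquad v z).const_mul ⟪u, w⟫)).fun_add
    ((hquad v w).const_mul ⟪u, z⟫)
  calc ∫ x, ⟪u, x⟫ * ⟪v, x⟫ * ⟪w, x⟫ * ⟪z, x⟫ * exp (-‖x‖ ^ 2) ∂μ
      = ∫ x, ⟪u, x⟫ * (⟪v, x⟫ * ⟪w, x⟫ * ⟪z, x⟫) * exp (-‖x‖ ^ 2) ∂μ := by
        simp only [mul_assoc]
    _ = (∫ x, (⟪u, v⟫ * (⟪w, x⟫ * ⟪z, x⟫ * exp (-‖x‖ ^ 2))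
          + ⟪u, w⟫ * (⟪v, x⟫ * ⟪z, x⟫ * exp (-‖x‖ ^ 2))
          + ⟪u, z⟫ * (⟪v, x⟫ * ⟪w, x⟫ * exp (-‖x‖ ^ 2))) ∂μ) / 2 := by
        rw [integral_inner_mul_mul_exp_neg_sq_norm μ hderiv ?_ ?_ ?_]
        · simp only [hsplit]
        · simpa only [hsplit] using hsplit_int
        · simpa [Fin.prod_univ_four, mul_assoc] using
            integrable_prod_inner_mul_exp_neg_sq_norm μ ![u, v, w, z]
        · simpa [Fin.prod_univ_three] using integrable_prod_inner_mul_exp_neg_sq_norm μ ![v, w, z]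
    _ = _ := by
        rw [integral_add (((hquad w z).const_mul _).fun_add ((hquad v z).const_mul _))
            ((hquad v w).const_mul _),
          integral_add ((hquad w z).const_mul _) ((hquad v z).const_mul _),
          integral_const_mul, integral_const_mul, integral_const_mul]
        simp only [integral_inner_mul_inner_mul_exp_neg_sq_norm]
        ring

theorem integral_toSphere_inner_mul_inner (u v : E) :
    ∫ ξ : sphere (0 : E) 1, ⟪u, (ξ : E)⟫ * ⟪v, ξ⟫ ∂μ.toSphere
      = ⟪u, v⟫ * (μ.toSphere.real univ / Module.finrank ℝ E) := by
  have h := integral_mul_exp_neg_sq_norm_of_homogeneous μ (f := fun x => ⟪u, x⟫ * ⟪v, x⟫) (d := 2)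
    (fun x r _ => by simp only [inner_smul_right]; ring)
    (by simpa using integrable_prod_inner_mul_exp_neg_sq_norm μ ![u, v])
  rw [integral_inner_mul_inner_mul_exp_neg_sq_norm,
    integral_exp_neg_sq_norm_eq_toSphere_mul_Gamma] at h
  set N : ℝ := (Module.finrank ℝ E : ℝ)
  have hN : 0 < N := Nat.cast_pos.2 Module.finrank_pos
  have hΓ : Gamma ((N + (2 : ℕ)) / 2) = N / 2 * Gamma (N / 2) := by
    rw [show (N + (2 : ℕ)) / 2 = N / 2 + 1 by push_cast; ring, Gamma_add_one (by positivity)]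
  have hΓpos : 0 < Gamma (N / 2) := Gamma_pos_of_pos (by positivity)
  rw [hΓ] at h
  field_simp at h ⊢
  linarith

theorem integral_toSphere_inner_mul_inner_mul_inner_mul_inner (u v w z : E) :
    ∫ ξ : sphere (0 : E) 1, ⟪u, (ξ : E)⟫ * ⟪v, ξ⟫ * ⟪w, ξ⟫ * ⟪z, ξ⟫ ∂μ.toSphere
      = (⟪u, v⟫ * ⟪w, z⟫ + ⟪u, w⟫ * ⟪v, z⟫ + ⟪u, z⟫ * ⟪v, w⟫)
        * (μ.toSphere.real univ / (Module.finrank ℝ E * (Module.finrank ℝ E + 2))) := by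
  have h := integral_mul_exp_neg_sq_norm_of_homogeneous μ
    (f := fun x => ⟪u, x⟫ * ⟪v, x⟫ * ⟪w, x⟫ * ⟪z, x⟫) (d := 4)
    (fun x r _ => by simp only [inner_smul_right]; ring)
    (by simpa [Fin.prod_univ_four] using integrable_prod_inner_mul_exp_neg_sq_norm μ ![u, v, w, z])
  rw [integral_inner_mul_inner_mul_inner_mul_inner_mul_exp_neg_sq_norm,
    integral_exp_neg_sq_norm_eq_toSphere_mul_Gamma] at h
  set N : ℝ := (Module.finrank ℝ E : ℝ)
  have hN : 0 < N := Nat.cast_pos.2 Module.finrank_pos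
  have hΓ : Gamma ((N + (4 : ℕ)) / 2) = (N + 2) / 2 * (N / 2) * Gamma (N / 2) := by
    rw [show (N + (4 : ℕ)) / 2 = (N / 2 + 1) + 1 by push_cast; ring, Gamma_add_one (by positivity),
      Gamma_add_one (by positivity)]
    ring
  have hΓpos : 0 < Gamma (N / 2) := Gamma_pos_of_pos (by positivity)
  rw [hΓ] at h
  field_simp at h ⊢
  linarith

end Gaussian

theorem sum_mul_isotropic4 {ι R : Type*} [Fintype ι] [DecidableEq ι] [CommSemiring R]
    (T : ι → ι → ι → ι → R) :
    ∑ a, ∑ b, ∑ c, ∑ d, T a b c d *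
      ((if a = b then 1 else 0) * (if c = d then 1 else 0)
        + (if a = c then 1 else 0) * (if b = d then 1 else 0)
        + (if a = d then 1 else 0) * (if b = c then 1 else 0))
      = ∑ a, ∑ b, (T a a b b + T a b a b + T a b b a) := by
  simp only [mul_add, Finset.sum_add_distrib, mul_ite, mul_one, mul_zero, Finset.sum_ite_eq,
    Finset.mem_univ, if_true, Finset.sum_ite_irrel, Finset.sum_const_zero]

instance (n : ℕ) : IsFiniteMeasure (sphereMeasure n) := by
  unfold sphereMeasure; infer_instance

section Sphere

variable {n : ℕ}

lemma Continuous.integrable_sphereMeasure {f : sphere (0 : EuclideanSpace ℝ (Fin n)) 1 → ℝ}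
    (hf : Continuous f) : Integrable f (sphereMeasure n) :=
  hf.integrable_of_hasCompactSupport (.of_compactSpace f)

lemma integral_sphereMeasure_finsetSum {ι : Type*} (s : Finset ι)
    {f : ι → sphere (0 : EuclideanSpace ℝ (Fin n)) 1 → ℝ} (hf : ∀ i ∈ s, Continuous (f i)) :
    ∫ ξ, ∑ i ∈ s, f i ξ ∂sphereMeasure n = ∑ i ∈ s, ∫ ξ, f i ξ ∂sphereMeasure n :=
  integral_finsetSum s fun i hi => (hf i hi).integrable_sphereMeasure

theorem integral_sphereMeasure_coord_mul_coord (a b : Fin n) :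
    ∫ ξ : sphere (0 : EuclideanSpace ℝ (Fin n)) 1,
      (ξ : EuclideanSpace ℝ (Fin n)) a * (ξ : EuclideanSpace ℝ (Fin n)) b ∂sphereMeasure n
      = (if a = b then 1 else 0) * (sphereVolume n / n) := by
  have : Nonempty (Fin n) := ⟨a⟩
  have h := integral_toSphere_inner_mul_inner volume
    (EuclideanSpace.single a (1 : ℝ)) (EuclideanSpace.single b 1)
  simp only [EuclideanSpace.inner_single_left, PiLp.single_apply, finrank_euclideanSpace_fin,
    map_one, one_mul] at h
  exact h

theorem integral_sphereMeasure_coord_mul_coord_mul_coord_mul_coord (a b c d : Fin n) :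
    ∫ ξ : sphere (0 : EuclideanSpace ℝ (Fin n)) 1,
      (ξ : EuclideanSpace ℝ (Fin n)) a * (ξ : EuclideanSpace ℝ (Fin n)) b *
        (ξ : EuclideanSpace ℝ (Fin n)) c * (ξ : EuclideanSpace ℝ (Fin n)) d ∂sphereMeasure n
      = ((if a = b then 1 else 0) * (if c = d then 1 else 0)
          + (if a = c then 1 else 0) * (if b = d then 1 else 0)
          + (if a = d then 1 else 0) * (if b = c then 1 else 0))
        * (sphereVolume n / (n * (n + 2))) := by
  have : Nonempty (Fin n) := ⟨a⟩
  have h := integral_toSphere_inner_mul_inner_mul_inner_mul_inner volume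
    (EuclideanSpace.single a (1 : ℝ)) (EuclideanSpace.single b 1)
    (EuclideanSpace.single c 1) (EuclideanSpace.single d 1)
  simp only [EuclideanSpace.inner_single_left, PiLp.single_apply, finrank_euclideanSpace_fin,
    map_one, one_mul] at h
  exact h

variable (V W : Fin n → ℝ)

theorem integral_sphereMeasure_quartic_term (Ric : Fin n → Fin n → ℝ) :
    ∫ ξ : sphere (0 : EuclideanSpace ℝ (Fin n)) 1,
      ∑ a, ∑ b, ∑ c, ∑ d, V a * W b * Ric c d *
        (ξ : EuclideanSpace ℝ (Fin n)) a * (ξ : EuclideanSpace ℝ (Fin n)) b *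
        (ξ : EuclideanSpace ℝ (Fin n)) c * (ξ : EuclideanSpace ℝ (Fin n)) d ∂sphereMeasure n
      = (∑ a, ∑ b, (V a * W a * Ric b b + V a * W b * Ric a b + V a * W b * Ric b a))
        * (sphereVolume n / (n * (n + 2))) := by
  have hterm : ∀ a b c d, ∫ ξ : sphere (0 : EuclideanSpace ℝ (Fin n)) 1, V a * W b * Ric c d *
        (ξ : EuclideanSpace ℝ (Fin n)) a * (ξ : EuclideanSpace ℝ (Fin n)) b *
        (ξ : EuclideanSpace ℝ (Fin n)) c * (ξ : EuclideanSpace ℝ (Fin n)) d ∂sphereMeasure n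
      = V a * W b * Ric c d * ((if a = b then 1 else 0) * (if c = d then 1 else 0)
          + (if a = c then 1 else 0) * (if b = d then 1 else 0)
          + (if a = d then 1 else 0) * (if b = c then 1 else 0))
        * (sphereVolume n / (n * (n + 2))) := fun a b c d => by
    rw [mul_assoc _ _ (sphereVolume n / _),
      ← integral_sphereMeasure_coord_mul_coord_mul_coord_mul_coord, ← integral_const_mul]
    simp only [mul_assoc]
  simp (disch := intro _ _; fun_prop) only [integral_sphereMeasure_finsetSum, hterm]
  simp only [← Finset.sum_mul, sum_mul_isotropic4]

theorem integral_sphereMeasure_ricci_term (Ric : Fin n → Fin n → ℝ) :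
    ∫ ξ : sphere (0 : EuclideanSpace ℝ (Fin n)) 1,
      ∑ a, ∑ b, ∑ c, V a * W b * (ξ : EuclideanSpace ℝ (Fin n)) c *
        ((ξ : EuclideanSpace ℝ (Fin n)) a * Ric b c + (ξ : EuclideanSpace ℝ (Fin n)) b * Ric a c)
        ∂sphereMeasure n
      = (∑ a, ∑ b, V a * W b * (Ric b a + Ric a b)) * (sphereVolume n / n) := by
  have hterm : ∀ a b c, ∫ ξ : sphere (0 : EuclideanSpace ℝ (Fin n)) 1,
      V a * W b * (ξ : EuclideanSpace ℝ (Fin n)) c *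
        ((ξ : EuclideanSpace ℝ (Fin n)) a * Ric b c + (ξ : EuclideanSpace ℝ (Fin n)) b * Ric a c)
        ∂sphereMeasure n
      = V a * W b * (Ric b c * (if c = a then 1 else 0) + Ric a c * (if c = b then 1 else 0))
        * (sphereVolume n / n) := fun a b c => by
    calc _ = ∫ ξ : sphere (0 : EuclideanSpace ℝ (Fin n)) 1,
          V a * W b * Ric b c *
              ((ξ : EuclideanSpace ℝ (Fin n)) c * (ξ : EuclideanSpace ℝ (Fin n)) a)
            + V a * W b * Ric a c *
              ((ξ : EuclideanSpace ℝ (Fin n)) c * (ξ : EuclideanSpace ℝ (Fin n)) b)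
          ∂sphereMeasure n := by
          congr 1 with ξ; ring
      _ = _ := by
          rw [integral_add ((by fun_prop : Continuous _).integrable_sphereMeasure)
              ((by fun_prop : Continuous _).integrable_sphereMeasure), integral_const_mul,
            integral_const_mul, integral_sphereMeasure_coord_mul_coord,
            integral_sphereMeasure_coord_mul_coord]
          ring
  simp (disch := intro _ _; fun_prop) only [integral_sphereMeasure_finsetSum, hterm]
  simp only [← Finset.sum_mul, mul_ite, mul_one, mul_zero, mul_add, Finset.sum_add_distrib,
    Finset.sum_ite_eq', Finset.mem_univ, if_true]

theorem integral_sphereMeasure_curvature_term (Rm : Fin n → Fin n → Fin n → Fin n → ℝ) :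
    ∫ ξ : sphere (0 : EuclideanSpace ℝ (Fin n)) 1,
      ∑ a, ∑ b, ∑ c, ∑ d, V a * W b * (ξ : EuclideanSpace ℝ (Fin n)) c * Rm c a d b *
        (ξ : EuclideanSpace ℝ (Fin n)) d ∂sphereMeasure n
      = (∑ a, ∑ b, V a * W b * ∑ c, Rm c a c b) * (sphereVolume n / n) := by
  have hterm : ∀ a b c d, ∫ ξ : sphere (0 : EuclideanSpace ℝ (Fin n)) 1,
      V a * W b * (ξ : EuclideanSpace ℝ (Fin n)) c * Rm c a d b *
        (ξ : EuclideanSpace ℝ (Fin n)) d ∂sphereMeasure n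
      = V a * W b * Rm c a d b * (if c = d then 1 else 0) * (sphereVolume n / n) :=
    fun a b c d => by
      rw [mul_assoc _ _ (sphereVolume n / _), ← integral_sphereMeasure_coord_mul_coord,
        ← integral_const_mul]
      congr 1 with ξ; ring
  simp (disch := intro _ _; fun_prop) only [integral_sphereMeasure_finsetSum, hterm]
  simp only [← Finset.sum_mul, mul_ite, mul_one, mul_zero, Finset.sum_ite_eq, Finset.mem_univ,
    if_true, Finset.mul_sum]

end Sphere

theorem einstein_symbol_sphere_integral_general (m : ℕ) (hm : 1 ≤ m)
    (V W : Fin (2 * m) → ℝ)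
    (Ric : Fin (2 * m) → Fin (2 * m) → ℝ)
    (Rm : Fin (2 * m) → Fin (2 * m) → Fin (2 * m) → Fin (2 * m) → ℝ)
    (hRicSym : ∀ a b, Ric a b = Ric b a)
    (hRmContr : ∀ a b, ∑ c, Rm c a c b = Ric a b) :
    (∫ ξ : sphere (0 : EuclideanSpace ℝ (Fin (2 * m))) 1,
        (-(m * (m + 1) : ℝ) / 3) *
          (∑ a, ∑ b, ∑ c, ∑ d, V a * W b * Ric c d *
            (ξ : EuclideanSpace ℝ (Fin (2 * m))) a *
            (ξ : EuclideanSpace ℝ (Fin (2 * m))) b *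
            (ξ : EuclideanSpace ℝ (Fin (2 * m))) c *
            (ξ : EuclideanSpace ℝ (Fin (2 * m))) d)
        + (2 * (m : ℝ) / 3) *
          ((∑ a, ∑ b, ∑ c, V a * W b * (ξ : EuclideanSpace ℝ (Fin (2 * m))) c *
              ((ξ : EuclideanSpace ℝ (Fin (2 * m))) a * Ric b c +
                (ξ : EuclideanSpace ℝ (Fin (2 * m))) b * Ric a c))
            - ∑ a, ∑ b, ∑ c, ∑ d, V a * W b *
                (ξ : EuclideanSpace ℝ (Fin (2 * m))) c * Rm c a d b *
                (ξ : EuclideanSpace ℝ (Fin (2 * m))) d)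
        ∂(sphereMeasure (2 * m)))
      = sphereVolume (2 * m) / 6 *
          ∑ a, ∑ b, (Ric a b - 1 / 2 * (∑ c, Ric c c) * (if a = b then 1 else 0))
            * V a * W b := by
  have hsym : ∑ a, ∑ b, V a * W b * Ric b a = ∑ a, ∑ b, V a * W b * Ric a b :=
    Finset.sum_congr rfl fun a _ => Finset.sum_congr rfl fun b _ => by rw [hRicSym]
  have hkronecker :
      ∑ a, ∑ b, (Ric a b - 1 / 2 * (∑ c, Ric c c) * (if a = b then 1 else 0)) * V a * W b
        = ∑ a, ∑ b, V a * W b * Ric a b - 1 / 2 * (∑ c, Ric c c) * ∑ a, V a * W a := by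
    simp only [sub_mul, Finset.sum_sub_distrib, mul_ite, ite_mul, mul_one, mul_zero, zero_mul,
      Finset.sum_ite_eq, Finset.mem_univ, if_true, Finset.mul_sum]
    simp only [mul_comm, mul_left_comm, mul_assoc]
  rw [integral_add, integral_const_mul, integral_const_mul, integral_sub,
    integral_sphereMeasure_quartic_term, integral_sphereMeasure_ricci_term,
    integral_sphereMeasure_curvature_term, hkronecker]
  · simp only [hRmContr, mul_add, Finset.sum_add_distrib, ← Finset.mul_sum, ← Finset.sum_mul, hsym]
    have hm0 : (m : ℝ) ≠ 0 := Nat.cast_ne_zero.2 (by omega)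
    push_cast
    field_simp
    ring
  all_goals exact (by fun_prop : Continuous _).integrable_sphereMeasure

/-- the spherical integral of the order `-2m` symbol of `VW Δ^{-m}`
yields the Einstein tensor density:
`∫_{S^{n-1}} ( -m(m+1)/3 V^a W^b Ric_{cd} ξ_a ξ_b ξ_c ξ_d
   + 2m/3 V^a W^b ξ_c (ξ_a Ric_{bc} + ξ_b Ric_{ac} - R_{cadb} ξ_d) ) dξ
 = v_{n-1}/6 (Ric_{ab} - ½ R δ_{ab}) V^a W^b`. -/
theorem einstein_symbol_sphere_integral (m : ℕ) (hm : 1 ≤ m)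
    (V W : Fin (2 * m) → ℝ)
    (Ric : Fin (2 * m) → Fin (2 * m) → ℝ)
    (Rm : Fin (2 * m) → Fin (2 * m) → Fin (2 * m) → Fin (2 * m) → ℝ)
    (hRicSym : ∀ a b, Ric a b = Ric b a)
    (hRmAnti1 : ∀ a b c d, Rm a b c d = - Rm b a c d)
    (hRmAnti2 : ∀ a b c d, Rm a b c d = - Rm a b d c)
    (hRmPair : ∀ c a d b, Rm c a d b = Rm d b c a)
    (hRmContr : ∀ a b, ∑ c, Rm c a c b = Ric a b) :
    (∫ ξ : sphere (0 : EuclideanSpace ℝ (Fin (2 * m))) 1,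
        (-(m * (m + 1) : ℝ) / 3) *
          (∑ a, ∑ b, ∑ c, ∑ d, V a * W b * Ric c d *
            (ξ : EuclideanSpace ℝ (Fin (2 * m))) a *
            (ξ : EuclideanSpace ℝ (Fin (2 * m))) b *
            (ξ : EuclideanSpace ℝ (Fin (2 * m))) c *
            (ξ : EuclideanSpace ℝ (Fin (2 * m))) d)
        + (2 * (m : ℝ) / 3) *
          ((∑ a, ∑ b, ∑ c, V a * W b * (ξ : EuclideanSpace ℝ (Fin (2 * m))) c *
              ((ξ : EuclideanSpace ℝ (Fin (2 * m))) a * Ric b c +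
                (ξ : EuclideanSpace ℝ (Fin (2 * m))) b * Ric a c))
            - ∑ a, ∑ b, ∑ c, ∑ d, V a * W b *
                (ξ : EuclideanSpace ℝ (Fin (2 * m))) c * Rm c a d b *
                (ξ : EuclideanSpace ℝ (Fin (2 * m))) d)
        ∂(sphereMeasure (2 * m)))
      = sphereVolume (2 * m) / 6 *
          ∑ a, ∑ b, (Ric a b - 1 / 2 * (∑ c, Ric c c) * (if a = b then 1 else 0))
            * V a * W b :=
  einstein_symbol_sphere_integral_general m hm V W Ric Rm hRicSym hRmContr
end

section
/- Let $A$ be a unital algebra with trace $\tau$ invariant under commuting derivations $\delta_1, \delta_2$ on the noncommutative 2-torus, and let $k \in A$ (or its commutant copy) be positive invertible. For the conformally rescaled Dirac operator $D_k = kDk$ with $D = \sigma^a\delta_a$ ($\sigma^a$ Pauli matrices), the symbol of order $-2$ of $D_k^{-1} = k^{-1}D^{-1}k^{-1}$ is $\sigma_{-2}(D_k^{-1}) = \sigma^p\bigl(\frac{\delta_{pq}}{\|\xi\|^2} - \frac{2\xi_p\xi_q}{\|\xi\|^4}\bigr)(-k^{-2}\delta_q(k)k^{-1})$, and its integral over the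 unit circle $\|\xi\| = 1$ vanishes. -/
open Finset intervalIntegral Matrix

set_option maxHeartbeats 2000000 in
/-- for the conformally rescaled Dirac operator `D_k = k D k` on the
noncommutative 2-torus, with `D = σ^a δ_a` built from Pauli matrices, the symbol
of order `-2` of `D_k^{-1} = k⁻¹ D⁻¹ k⁻¹`, computed from the composition formula
(the order `-2` term of `k⁻¹ ∘ D⁻¹ ∘ k⁻¹` is `k⁻¹ ∂_a^ξ σ(D⁻¹) δ_a(k⁻¹)` with
`σ(D⁻¹)(ξ) = σ^a ξ_a / ‖ξ‖²`), equals
`σ^p (δ_{pq}/‖ξ‖² - 2 ξ_p ξ_q/‖ξ‖⁴)(-k⁻² δ_q(k) k⁻¹)`,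
and its integral over the unit circle `‖ξ‖ = 1` vanishes. -/
theorem nc2torus_dirac_symbol_minus_two
    {A : Type*} [NormedRing A] [NormedAlgebra ℂ A] [StarRing A] [CompleteSpace A]
    (δ : Fin 2 → A →ₗ[ℂ] A)
    (hLeib : ∀ a x y, δ a (x * y) = δ a x * y + x * δ a y)
    (k kinv : A) (hk1 : k * kinv = 1) (hk2 : kinv * k = 1)
    (hself : star k = k) (hpos : ∃ g : A, k = star g * g) :
    -- Pauli matrices with entries in `A`
    let P : Fin 2 → Matrix (Fin 2) (Fin 2) A :=
      ![!![(0 : A), 1; 1, 0],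
        !![(0 : A), -(Complex.I • (1 : A)); Complex.I • (1 : A), 0]]
    -- `∂_a^ξ` of the symbol `σ(D⁻¹)(ξ) = ‖ξ‖⁻² ∑ σ^b ξ_b`
    let pd : Fin 2 → (Fin 2 → ℝ) → Matrix (Fin 2) (Fin 2) A := fun a ξ =>
      (((ξ 0) ^ 2 + (ξ 1) ^ 2)⁻¹ • P a)
        - ((2 * ξ a) * (((ξ 0) ^ 2 + (ξ 1) ^ 2)⁻¹) ^ 2) • ∑ b, ξ b • P b
    -- the order `-2` symbol of `D_k⁻¹ = k⁻¹ ∘ D⁻¹ ∘ k⁻¹`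
    let E : (Fin 2 → ℝ) → Matrix (Fin 2) (Fin 2) A := fun ξ =>
      (kinv • (1 : Matrix (Fin 2) (Fin 2) A)) *
        ∑ a, pd a ξ * (δ a kinv • (1 : Matrix (Fin 2) (Fin 2) A))
    -- the claimed formula `σ^p (δ_{pq}/‖ξ‖² - 2ξ_pξ_q/‖ξ‖⁴)(-k⁻² δ_q(k) k⁻¹)`
    let S : (Fin 2 → ℝ) → Matrix (Fin 2) (Fin 2) A := fun ξ =>
      ∑ p, ∑ q,
        ((if p = q then (1 : ℝ) else 0) * (((ξ 0) ^ 2 + (ξ 1) ^ 2)⁻¹)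
            - 2 * ξ p * ξ q * (((ξ 0) ^ 2 + (ξ 1) ^ 2)⁻¹) ^ 2) •
          (P p * ((-(kinv * kinv * δ q k * kinv)) • (1 : Matrix (Fin 2) (Fin 2) A)))
    (∀ ξ : Fin 2 → ℝ, ξ ≠ 0 → E ξ = S ξ) ∧
    (∀ i j : Fin 2,
      (∫ θ in (0 : ℝ)..(2 * Real.pi), S ![Real.cos θ, Real.sin θ] i j) = 0) := by
  intro P pd E S
  have h0 : ∀ a : Fin 2, δ a (1:A) = 0 := by
    intro a
    have h := hLeib a 1 1
    simp at h
    exact h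
  have hδ : ∀ a : Fin 2, δ a kinv = -(kinv * δ a k * kinv) := by
    intro a
    have h := hLeib a kinv k
    rw [hk2, h0] at h
    have h2 : δ a kinv * k = -(kinv * δ a k) := by
      have := h.symm
      exact eq_neg_of_add_eq_zero_left h.symm
    calc δ a kinv = δ a kinv * (k * kinv) := by rw [hk1, mul_one]
      _ = (δ a kinv * k) * kinv := by rw [mul_assoc]
      _ = (-(kinv * δ a k)) * kinv := by rw [h2]
      _ = -(kinv * δ a k * kinv) := by rw [neg_mul]
  constructor
  · intro ξ hξ
    ext i j
    simp only [E, S, pd, P]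
    fin_cases i <;> fin_cases j <;>
      [skip; skip; skip; (rw [show ((⟨1,by norm_num⟩ : Fin 2)) = 1 from rfl])] <;>
      simp [Matrix.mul_apply, Matrix.sum_apply, Matrix.vecMul, dotProduct,
        Fin.sum_univ_two, hδ,
        mul_smul_comm, smul_mul_assoc, mul_add, add_mul, smul_smul, mul_assoc,
        smul_sub, sub_mul, mul_sub, smul_add] <;>
      module
  · intro i j
    have hone : ∀ θ : ℝ, ((![Real.cos θ, Real.sin θ] : Fin 2 → ℝ) 0 ^ 2 + (![Real.cos θ, Real.sin θ] : Fin 2 → ℝ) 1 ^ 2 : ℝ) = 1 := fun θ => by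
      simpa using Real.cos_sq_add_sin_sq θ
    have hfun : ∀ θ : ℝ, S ![Real.cos θ, Real.sin θ] i j =
        ∑ p : Fin 2, ∑ q : Fin 2,
          ((if p = q then (1:ℝ) else 0)
              - 2 * ![Real.cos θ, Real.sin θ] p * ![Real.cos θ, Real.sin θ] q) •
            ((P p * ((-(kinv * kinv * δ q k * kinv)) •
                (1 : Matrix (Fin 2) (Fin 2) A))) i j) := by
      intro θ
      simp only [S, Matrix.sum_apply, Matrix.smul_apply, hone θ]
      norm_num
    simp only [hfun]
    have Ic : (∫ θ in (0:ℝ)..2*Real.pi, Real.cos θ * Real.cos θ) = Real.pi := by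
      have := integral_cos_sq (a := (0:ℝ)) (b := 2*Real.pi)
      simp [Real.sin_two_pi, Real.cos_two_pi, ← sq] at this ⊢
      try rw [this]; try ring
    have Is : (∫ θ in (0:ℝ)..2*Real.pi, Real.sin θ * Real.sin θ) = Real.pi := by
      have := integral_sin_sq (a := (0:ℝ)) (b := 2*Real.pi)
      simp [Real.sin_two_pi, Real.cos_two_pi, ← sq] at this ⊢
      try rw [this]; try ring
    have Isc : (∫ θ in (0:ℝ)..2*Real.pi, Real.sin θ * Real.cos θ) = 0 := by
      have := integral_sin_mul_cos₁ (a := (0:ℝ)) (b := 2*Real.pi)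
      simp [Real.sin_two_pi, ← sq] at this ⊢
      try rw [this]
    have Ics : (∫ θ in (0:ℝ)..2*Real.pi, Real.cos θ * Real.sin θ) = 0 := by
      rw [intervalIntegral.integral_congr (g := fun θ => Real.sin θ * Real.cos θ)
        (fun θ _ => mul_comm _ _)]
      exact Isc
    rw [intervalIntegral.integral_finset_sum]
    · refine Finset.sum_eq_zero fun p _ => ?_
      rw [intervalIntegral.integral_finset_sum]
      · refine Finset.sum_eq_zero fun q _ => ?_
        rw [intervalIntegral.integral_smul_const]
        have hcoef : (∫ θ in (0:ℝ)..2*Real.pi,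
            ((if p = q then (1:ℝ) else 0)
              - 2 * ![Real.cos θ, Real.sin θ] p * ![Real.cos θ, Real.sin θ] q)) = 0 := by
          fin_cases p <;> fin_cases q <;> simp [mul_assoc] <;>
          first
          | exact Ics
          | exact Isc
          | · rw [intervalIntegral.integral_sub intervalIntegrable_const
                (by apply Continuous.intervalIntegrable; fun_prop),
                intervalIntegral.integral_const_mul, intervalIntegral.integral_const]
              simp [Ic, Is]
              try ring
        rw [hcoef, zero_smul]
      · intro q _
        apply Continuous.intervalIntegrable
        fin_cases p <;> fin_cases q <;> simp <;> fun_prop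
    · intro p _
      apply Continuous.intervalIntegrable
      apply continuous_finset_sum
      intro q _
      fin_cases p <;> fin_cases q <;> simp <;> fun_prop
end

section
/- Let $(\mathcal{A}, D, \mathcal{H})$ be a spectral triple with a trace $\mathcal{W}$ on a generalized pseudodifferential algebra, which is spectrally closed, i.e. $\mathcal{W}(T D|D|^{-n}) = 0$ for every zero-order operator $T$ (an element of the algebra generated by $\mathcal{A}$ and one-forms). Define $\mathcal{G}_D(v,w) = \mathcal{W}(v\{D,w\}D|D|^{-n})$ for one-forms $v, w$. Then for every $b \in \mathcal{A}$: $\mathcal{G}_D(vb, w) = \mathcal{G}_D(v, bw)$. -/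
/-- for a spectrally closed spectral triple, the Einstein functional
`𝒢_D(v,w) = 𝒲(v {D,w} D |D|^{-n})` satisfies `𝒢_D(vb, w) = 𝒢_D(v, bw)` for all
`b ∈ 𝒜` and one-forms `v, w`.  Here `B` is the algebra of (pseudodifferential)
operators, `A ⊆ B` the algebra of the triple, `D ∈ B` the Dirac operator, `E ∈ B`
the operator `|D|^{-n}`, `Ω¹` the `A`-bimodule generated by commutators `[D,a]`,
`𝒲` a trace, and spectral closedness means `𝒲(T·D|D|^{-n}) = 0` for every `T` in
the algebra generated by `A` and the one-forms. -/
theorem einstein_functional_bilinear {B : Type*} [Ring B] [Algebra ℂ B]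
    (A : Subalgebra ℂ B) (D E : B)
    (W : B →ₗ[ℂ] ℂ) (hWtr : ∀ x y : B, W (x * y) = W (y * x))
    (hclosed : ∀ T ∈ Algebra.adjoin ℂ
        ((A : Set B) ∪ {x | ∃ a ∈ A, x = D * a - a * D}),
      W (T * (D * E)) = 0)
    (v w : B)
    (hv : v ∈ Submodule.span ℂ
      {x | ∃ a ∈ A, ∃ b ∈ A, ∃ c ∈ A, x = a * (D * b - b * D) * c})
    (hw : w ∈ Submodule.span ℂ
      {x | ∃ a ∈ A, ∃ b ∈ A, ∃ c ∈ A, x = a * (D * b - b * D) * c})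
    (b : B) (hb : b ∈ A) :
    W ((v * b) * (D * w + w * D) * (D * E))
      = W (v * (D * (b * w) + (b * w) * D) * (D * E)) := by
  set S := Algebra.adjoin ℂ ((A : Set B) ∪ {x | ∃ a ∈ A, x = D * a - a * D}) with hS
  have hspan : Submodule.span ℂ
      {x | ∃ a ∈ A, ∃ b ∈ A, ∃ c ∈ A, x = a * (D * b - b * D) * c} ≤ S.toSubmodule := by
    rw [Submodule.span_le]
    rintro x ⟨a, ha, b', hb', c, hc, rfl⟩
    exact S.mul_mem (S.mul_mem (Algebra.subset_adjoin (Or.inl ha))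
      (Algebra.subset_adjoin (Or.inr ⟨b', hb', rfl⟩))) (Algebra.subset_adjoin (Or.inl hc))
  have hvS : v ∈ S := hspan hv
  have hwS : w ∈ S := hspan hw
  have hT : v * (D * b - b * D) * w ∈ S :=
    mul_mem (mul_mem hvS (Algebra.subset_adjoin (Or.inr ⟨b, hb, rfl⟩))) hwS
  have h0 := hclosed _ hT
  have hsub : (v * b) * (D * w + w * D) * (D * E)
      - v * (D * (b * w) + (b * w) * D) * (D * E)
      = -((v * (D * b - b * D) * w) * (D * E)) := by noncomm_ring
  have := map_sub W ((v * b) * (D * w + w * D) * (D * E))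
    (v * (D * (b * w) + (b * w) * D) * (D * E))
  rw [hsub, map_neg, h0, neg_zero] at this
  exact sub_eq_zero.mp this.symm
end
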